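/- arXiv:gr-qc/0107018 — 3 statements merged into one kernel-verified Lean document; each statement's English description precedes it below -/
import Mathlib

section
/- Let f = f₁ + r·f₂ with f₁, f₂ real-analytic near the origin in ℝ³, r(x) = ‖x‖, and suppose f(x) ≠ 0 for all x in a neighborhood of the origin. Then 1/f ∈ E^ω, i.e., 1/f = g₁ + r·g₂ for some functions g₁, g₂ real-analytic near the origin. (Hint: 1/f = (f₁ − r f₂)/(f₁² − r² f₂²), and f₁² − r² f₂² is analytic and nonvanishing near the origin.) -/
/-- The Euclidean radial coordinate `r(x) = (x₁² + x₂² + x₃²)^{1/2}` on ℝ³. -/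
noncomputable def rad (x : Fin 3 → ℝ) : ℝ := Real.sqrt (x 0 ^ 2 + x 1 ^ 2 + x 2 ^ 2)

/-- The space `E^ω`: functions of the form `f = f₁ + r·f₂` on a neighborhood of the
origin, with `f₁, f₂` real-analytic near the origin. -/
def IsEOmega (f : (Fin 3 → ℝ) → ℝ) : Prop :=
  ∃ (f₁ f₂ : (Fin 3 → ℝ) → ℝ) (U : Set (Fin 3 → ℝ)), U ∈ nhds (0 : Fin 3 → ℝ) ∧
    (∀ x ∈ U, AnalyticAt ℝ f₁ x) ∧ (∀ x ∈ U, AnalyticAt ℝ f₂ x) ∧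
    ∀ x ∈ U, f x = f₁ x + rad x * f₂ x

lemma rad_sq (x : Fin 3 → ℝ) : rad x ^ 2 = x 0 ^ 2 + x 1 ^ 2 + x 2 ^ 2 := by
  unfold rad
  rw [Real.sq_sqrt]
  positivity

lemma q_analytic (x : Fin 3 → ℝ) :
    AnalyticAt ℝ (fun y : Fin 3 → ℝ => y 0 ^ 2 + y 1 ^ 2 + y 2 ^ 2) x := by
  have h : ∀ i : Fin 3, AnalyticAt ℝ (fun y : Fin 3 → ℝ => y i) x := fun i =>
    (ContinuousLinearMap.proj (R := ℝ) (φ := fun _ : Fin 3 => ℝ) i).analyticAt x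
  exact (((h 0).pow 2).add ((h 1).pow 2)).add ((h 2).pow 2)

/-- if `f = f₁ + r f₂ ∈ E^ω` is nonvanishing on a neighborhood of the
origin (with `f₁, f₂` analytic there), then `1/f ∈ E^ω`. -/
theorem EOmega_inv (f f₁ f₂ : (Fin 3 → ℝ) → ℝ) (U : Set (Fin 3 → ℝ))
    (hU : U ∈ nhds (0 : Fin 3 → ℝ))
    (hf₁ : ∀ x ∈ U, AnalyticAt ℝ f₁ x) (hf₂ : ∀ x ∈ U, AnalyticAt ℝ f₂ x)
    (hf : ∀ x ∈ U, f x = f₁ x + rad x * f₂ x)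
    (hnz : ∀ x ∈ U, f x ≠ 0) :
    IsEOmega (fun x => 1 / f x) := by
  set D : (Fin 3 → ℝ) → ℝ :=
    fun x => f₁ x ^ 2 - (x 0 ^ 2 + x 1 ^ 2 + x 2 ^ 2) * f₂ x ^ 2 with hD_def
  have h0U : (0 : Fin 3 → ℝ) ∈ U := mem_of_mem_nhds hU
  have hDan : ∀ x ∈ U, AnalyticAt ℝ D x := fun x hx =>
    ((hf₁ x hx).pow 2).sub ((q_analytic x).mul ((hf₂ x hx).pow 2))
  -- D 0 ≠ 0
  have hrad0 : rad (0 : Fin 3 → ℝ) = 0 := by simp [rad]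
  have hf10 : f₁ 0 ≠ 0 := by
    have := hf 0 h0U
    rw [hrad0] at this
    simpa [this] using hnz 0 h0U
  have hD0 : D 0 ≠ 0 := by
    simp [hD_def]
    positivity
  have hcont : ContinuousAt D 0 := (hDan 0 h0U).continuousAt
  have hVn : D ⁻¹' {0}ᶜ ∈ nhds (0 : Fin 3 → ℝ) :=
    hcont.preimage_mem_nhds (isOpen_compl_singleton.mem_nhds hD0)
  refine ⟨fun x => f₁ x / D x, fun x => -f₂ x / D x, U ∩ D ⁻¹' {0}ᶜ,
    Filter.inter_mem hU hVn, ?_, ?_, ?_⟩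
  · exact fun x hx => (hf₁ x hx.1).div (hDan x hx.1) hx.2
  · exact fun x hx => ((hf₂ x hx.1).neg).div (hDan x hx.1) hx.2
  · intro x hx
    have hDx : D x ≠ 0 := hx.2
    have hfx : f x ≠ 0 := hnz x hx.1
    have hDf : D x = f x * (f₁ x - rad x * f₂ x) := by
      show f₁ x ^ 2 - (x 0 ^ 2 + x 1 ^ 2 + x 2 ^ 2) * f₂ x ^ 2 = _
      rw [hf x hx.1]
      linear_combination (f₂ x ^ 2) * rad_sq x
    have hsub : f₁ x - rad x * f₂ x ≠ 0 := by
      intro h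
      apply hDx
      rw [hDf, h, mul_zero]
    show 1 / f x = f₁ x / D x + rad x * (-f₂ x / D x)
    rw [hDf]
    field_simp
    ring
end

section
/- Let p : ℝ³ → ℝ³ be a vector field whose components pⁱ are homogeneous polynomials of degree m, and let s be an integer with s + m + 2 ≠ 0. Suppose that ∂ᵢ(r^s pⁱ) = 0 on ℝ³ \ {0}, where r(x) = ‖x‖. Define βₖ = r^s (s + m + 2)^{-1} ε_{kjl} p^j x^l, where ε is the Levi-Civita symbol. Then ε^{ijk} ∂ⱼ βₖ = r^s pⁱ on ℝ³ \ {0}, i.e., the curl of β equals r^s p. -/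
/-- The Levi-Civita symbol `ε_{ijk}` on three indices, with `ε₀₁₂ = 1`. -/
def lc (i j k : Fin 3) : ℝ :=
  if (i = 0 ∧ j = 1 ∧ k = 2) ∨ (i = 1 ∧ j = 2 ∧ k = 0) ∨ (i = 2 ∧ j = 0 ∧ k = 1) then 1
  else if (i = 2 ∧ j = 1 ∧ k = 0) ∨ (i = 1 ∧ j = 0 ∧ k = 2) ∨ (i = 0 ∧ j = 2 ∧ k = 1) then -1
  else 0

/-- The partial derivative `∂ᵢ f` in Cartesian coordinates. -/
noncomputable def pd (i : Fin 3) (f : (Fin 3 → ℝ) → ℝ) (x : Fin 3 → ℝ) : ℝ :=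
  fderiv ℝ f x (Pi.single i 1)

open MvPolynomial

lemma sum_lc_mul_lc (i j a b : Fin 3) :
    ∑ k, lc i j k * lc k a b =
      (if i = a ∧ j = b then 1 else 0) - (if i = b ∧ j = a then 1 else 0) := by
  fin_cases i <;> fin_cases j <;> fin_cases a <;> fin_cases b <;> simp [lc]

lemma sum_lc_mul_sum_lc_mul (T : Fin 3 → Fin 3 → Fin 3 → ℝ) (i : Fin 3) :
    ∑ j, ∑ k, lc i j k * ∑ a, ∑ b, lc k a b * T j a b = ∑ j, T j i j - ∑ j, T j j i := by
  have contract : ∀ j, ∑ k, lc i j k * ∑ a, ∑ b, lc k a b * T j a b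
      = ∑ a, ∑ b, (∑ k, lc i j k * lc k a b) * T j a b := by
    intro j
    simp only [Finset.mul_sum, Finset.sum_mul, mul_assoc]
    rw [Finset.sum_comm]
    exact Finset.sum_congr rfl fun a _ => Finset.sum_comm
  simp [contract, sum_lc_mul_lc, sub_mul, ite_and, Finset.sum_sub_distrib]

lemma pd_mul {f g : (Fin 3 → ℝ) → ℝ} {x : Fin 3 → ℝ} (j : Fin 3)
    (hf : DifferentiableAt ℝ f x) (hg : DifferentiableAt ℝ g x) :
    pd j (fun y => f y * g y) x = pd j f x * g x + f x * pd j g x := by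
  simp [pd, fderiv_fun_mul hf hg]
  ring

lemma pd_const_mul (j : Fin 3) (c : ℝ) (f : (Fin 3 → ℝ) → ℝ) (x : Fin 3 → ℝ) :
    pd j (fun y => c * f y) x = c * pd j f x := by
  change fderiv ℝ (c • f) x _ = _
  rw [fderiv_const_smul_field]
  rfl

lemma pd_coord (j l : Fin 3) (x : Fin 3 → ℝ) :
    pd j (fun y => y l) x = if l = j then 1 else 0 := by
  have : fderiv ℝ (fun y : Fin 3 → ℝ => y l) x = ContinuousLinearMap.proj l :=
    (ContinuousLinearMap.proj l : (Fin 3 → ℝ) →L[ℝ] ℝ).fderiv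
  simp [pd, this, Pi.single_apply]

lemma pd_sum {F : Fin 3 → (Fin 3 → ℝ) → ℝ} {x : Fin 3 → ℝ} (j : Fin 3)
    (hF : ∀ a, DifferentiableAt ℝ (F a) x) :
    pd j (fun y => ∑ a, F a y) x = ∑ a, pd j (F a) x := by
  simp [pd, fderiv_fun_sum (fun a _ => hF a)]

lemma sum_mul_pd_eq_fderiv (f : (Fin 3 → ℝ) → ℝ) (x : Fin 3 → ℝ) :
    ∑ j, x j * pd j f x = fderiv ℝ f x x := by
  rw [congrArg (fderiv ℝ f x) (pi_eq_sum_univ' x)]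
  simp [pd]

lemma fderiv_apply_self_of_homogeneous {E : Type*} [NormedAddCommGroup E] [NormedSpace ℝ E]
    {f : E → ℝ} {x : E} {d : ℝ} (hf : DifferentiableAt ℝ f x)
    (hhom : ∀ t : ℝ, 0 < t → f (t • x) = t ^ d * f x) :
    fderiv ℝ f x x = d * f x := by
  have ray : HasDerivAt (fun t : ℝ => f (t • x)) (fderiv ℝ f x x) 1 := by
    have hfx : HasFDerivAt f (fderiv ℝ f x) ((1 : ℝ) • x) := by
      rw [one_smul]; exact hf.hasFDerivAt
    simpa [Function.comp_def] using
      hfx.comp_hasDerivAt (1 : ℝ) ((hasDerivAt_id (1 : ℝ)).smul_const x)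
  have power : HasDerivAt (fun t : ℝ => t ^ d * f x) (d * f x) 1 := by
    simpa using (Real.hasDerivAt_rpow_const (p := d) (Or.inl one_ne_zero)).mul_const (f x)
  refine ray.unique (power.congr_of_eventuallyEq ?_)
  filter_upwards [lt_mem_nhds one_pos] with t ht using hhom t ht

lemma MvPolynomial.IsHomogeneous.eval_smul {σ R : Type*} [Fintype σ] [CommSemiring R]
    {P : MvPolynomial σ R} {m : ℕ} (hP : P.IsHomogeneous m) (t : R) (x : σ → R) :
    eval (t • x) P = t ^ m * eval x P := by
  rw [eval_eq', eval_eq', Finset.mul_sum]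
  refine Finset.sum_congr rfl fun d hd => ?_
  have hdeg : ∑ i, d i = m := by
    rw [← hP (mem_support_iff.mp hd)]
    simp [Finsupp.weight_apply, Finsupp.sum_fintype]
  simp only [Pi.smul_apply, smul_eq_mul, mul_pow, Finset.prod_mul_distrib,
    Finset.prod_pow_eq_pow_sum, hdeg]
  ring

lemma rad_smul (t : ℝ) (x : Fin 3 → ℝ) : rad (t • x) = |t| * rad x := by
  rw [rad, rad, ← Real.sqrt_sq_eq_abs, ← Real.sqrt_mul (sq_nonneg t)]
  simp only [Pi.smul_apply, smul_eq_mul]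
  ring_nf

lemma sum_sq_pos {x : Fin 3 → ℝ} (hx : x ≠ 0) : 0 < x 0 ^ 2 + x 1 ^ 2 + x 2 ^ 2 := by
  contrapose! hx
  have hzero : x 0 = 0 ∧ x 1 = 0 ∧ x 2 = 0 := by
    refine ⟨?_, ?_, ?_⟩ <;> nlinarith [sq_nonneg (x 0), sq_nonneg (x 1), sq_nonneg (x 2)]
  ext i
  fin_cases i <;> simp [hzero]

lemma differentiableAt_rad_zpow (s : ℤ) {x : Fin 3 → ℝ} (hx : x ≠ 0) :
    DifferentiableAt ℝ (fun y => rad y ^ s) x := by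
  have hsq : Differentiable ℝ (fun y : Fin 3 → ℝ => y 0 ^ 2 + y 1 ^ 2 + y 2 ^ 2) := by fun_prop
  exact ((hsq x).sqrt (sum_sq_pos hx).ne').zpow (Or.inl (Real.sqrt_pos.2 (sum_sq_pos hx)).ne')

lemma pd_sum_lc_mul_mul_coord {q : Fin 3 → (Fin 3 → ℝ) → ℝ} {x : Fin 3 → ℝ}
    (hq : ∀ a, DifferentiableAt ℝ (q a) x) (j k : Fin 3) :
    pd j (fun y => ∑ a, ∑ b, lc k a b * q a y * y b) x =
      ∑ a, ∑ b, lc k a b * (pd j (q a) x * x b + q a x * if b = j then 1 else 0) := by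
  have hcoord : ∀ b : Fin 3, DifferentiableAt ℝ (fun y : Fin 3 → ℝ => y b) x := fun b =>
    (ContinuousLinearMap.proj b : (Fin 3 → ℝ) →L[ℝ] ℝ).differentiableAt
  simp only [mul_assoc]
  rw [pd_sum (F := fun a y => ∑ b, lc k a b * (q a y * y b)) j fun a =>
    .fun_sum fun b _ => ((hq a).fun_mul (hcoord b)).const_mul _]
  refine Finset.sum_congr rfl fun a _ => ?_
  rw [pd_sum (F := fun b y => lc k a b * (q a y * y b)) j fun b =>
    ((hq a).fun_mul (hcoord b)).const_mul _]
  refine Finset.sum_congr rfl fun b _ => ?_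
  rw [pd_const_mul, pd_mul j (hq a) (hcoord b), pd_coord]

/-- `curl (q × x) = (div x) q - (div q) x + (x·∇) q - (q·∇) x`, with `div x = 3`, `(q·∇) x = q`. -/
lemma curl_cross_coord {q : Fin 3 → (Fin 3 → ℝ) → ℝ} {x : Fin 3 → ℝ}
    (hq : ∀ a, DifferentiableAt ℝ (q a) x) (i : Fin 3) :
    ∑ j, ∑ k, lc i j k * pd j (fun y => ∑ a, ∑ b, lc k a b * q a y * y b) x =
      2 * q i x + ∑ j, x j * pd j (q i) x - x i * ∑ j, pd j (q j) x := by
  simp only [pd_sum_lc_mul_mul_coord hq, sum_lc_mul_sum_lc_mul]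
  simp [Finset.sum_add_distrib, Fin.sum_univ_three]
  ring

lemma sum_mul_pd_of_homogeneous {f : (Fin 3 → ℝ) → ℝ} {x : Fin 3 → ℝ} {d : ℝ}
    (hf : DifferentiableAt ℝ f x) (hhom : ∀ t : ℝ, 0 < t → f (t • x) = t ^ d * f x) :
    ∑ j, x j * pd j f x = d * f x := by
  rw [sum_mul_pd_eq_fderiv, fderiv_apply_self_of_homogeneous hf hhom]

lemma rad_zpow_mul_eval_smul {P : MvPolynomial (Fin 3) ℝ} {m : ℕ} (hP : P.IsHomogeneous m)
    (s : ℤ) {t : ℝ} (ht : 0 < t) (x : Fin 3 → ℝ) :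
    rad (t • x) ^ s * eval (t • x) P = t ^ ((s : ℝ) + m) * (rad x ^ s * eval x P) := by
  rw [rad_smul, abs_of_pos ht, hP.eval_smul, Real.rpow_add ht, Real.rpow_intCast,
    Real.rpow_natCast, mul_zpow]
  ring

/-- if `pⁱ` are homogeneous polynomials of degree `m`, `s + m + 2 ≠ 0`,
and `∂ᵢ(r^s pⁱ) = 0` away from the origin, then
`βₖ = r^s (s+m+2)⁻¹ ε_{kjl} p^j x^l` satisfies `ε^{ijk} ∂ⱼ βₖ = r^s pⁱ` away from
the origin. -/
theorem curl_of_radial_potential (p : Fin 3 → (Fin 3 → ℝ) → ℝ) (m : ℕ) (s : ℤ)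
    (P : Fin 3 → MvPolynomial (Fin 3) ℝ)
    (hhom : ∀ i, (P i).IsHomogeneous m)
    (hp : ∀ i x, p i x = MvPolynomial.eval x (P i))
    (hs : (s : ℝ) + (m : ℝ) + 2 ≠ 0)
    (hdiv : ∀ x : Fin 3 → ℝ, x ≠ 0 → ∑ i, pd i (fun y => rad y ^ s * p i y) x = 0)
    (β : Fin 3 → (Fin 3 → ℝ) → ℝ)
    (hβ : ∀ k y, β k y =
      rad y ^ s * ((s : ℝ) + (m : ℝ) + 2)⁻¹ * ∑ j, ∑ l, lc k j l * p j y * y l) :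
    ∀ x : Fin 3 → ℝ, x ≠ 0 → ∀ i,
      ∑ j, ∑ k, lc i j k * pd j (β k) x = rad x ^ s * p i x := by
  intro x hx i
  set q : Fin 3 → (Fin 3 → ℝ) → ℝ := fun a y => rad y ^ s * p a y with hq
  change _ = q i x
  have hq_div : ∑ j, pd j (q j) x = 0 := hdiv x hx
  have hp' : ∀ a, p a = fun y => eval y (P a) := fun a => funext (hp a)
  have hq_diff : ∀ a, DifferentiableAt ℝ (q a) x := fun a => by
    simpa [hq, hp'] using (differentiableAt_rad_zpow s hx).fun_mul
      ((AnalyticOnNhd.eval_mvPolynomial (P a) x trivial).differentiableAt)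
  have hq_euler : ∀ a, ∑ j, x j * pd j (q a) x = ((s : ℝ) + m) * q a x := fun a =>
    sum_mul_pd_of_homogeneous (hq_diff a) fun t ht => by
      simpa [hq, hp'] using rad_zpow_mul_eval_smul (hhom a) s ht x
  have hβq : ∀ k, β k = fun y =>
      ((s : ℝ) + m + 2)⁻¹ * ∑ a, ∑ b, lc k a b * q a y * y b := fun k => by
    funext y
    simp only [hβ, hq, Finset.mul_sum]
    refine Finset.sum_congr rfl fun a _ => Finset.sum_congr rfl fun b _ => ?_
    ring
  simp only [hβq, pd_const_mul, mul_left_comm _ ((s : ℝ) + m + 2)⁻¹, ← Finset.mul_sum,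
    curl_cross_coord hq_diff, hq_euler, hq_div]
  field_simp
  ring
end

section
/- Let U ⊆ ℝⁿ be open and connected, let Ω : U → ℝ be a smooth function, and suppose Ω satisfies a second-order equation of the form ∂ᵢ∂ⱼΩ = Ω·Tᵢⱼ + f₁·δᵢⱼ + f₂·∂ᵢΩ·∂ⱼΩ on U, where Tᵢⱼ, f₁, f₂ are smooth. Assume at a point p ∈ U: Ω(p) = 0, ∂ᵢΩ(p) = 0 for all i, and ∂ᵢ∂ⱼΩ(p) = 2δᵢⱼ. Then for every n ≥ 1 the totally symmetric trace-free part of the n-th derivative tensor ∂_{j₁}⋯∂_{jₙ}Ω vanishes at p. -/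
/-- The partial derivative `∂ᵢ f` within a set `U ⊆ ℝᵈ`. -/
noncomputable def pdW {d : ℕ} (U : Set (Fin d → ℝ)) (i : Fin d)
    (f : (Fin d → ℝ) → ℝ) (x : Fin d → ℝ) : ℝ :=
  fderivWithin ℝ f U x (Pi.single i 1)

/-- A symmetric `n`-tensor has vanishing totally symmetric trace-free part iff the
associated homogeneous polynomial `x ↦ A(x,…,x)` is divisible by `r² = ∑ xᵢ²`.
We use this as the formalization of "the symmetric trace-free part vanishes". -/
def TraceFreePartVanishes {d : ℕ} (n : ℕ) (A : (Fin d → ℝ) → ℝ) : Prop :=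
  ∃ Q : MvPolynomial (Fin d) ℝ, ∀ x : Fin d → ℝ,
    A x = (∑ i, x i ^ 2) * MvPolynomial.eval x Q

/-!
Restrict to the line `t ↦ p + t • v`: `φ(t) = Ω(p + t v)` has `φ⁽ⁿ⁾(0) = DⁿΩ(p)(v, …, v)` and,
contracting the equation with `vᵢ vⱼ`, satisfies `φ'' = φ τ + |v|² f₁ + f₂ φ'²` with
`τ = ∑ vᵢ vⱼ Tᵢⱼ`. Differentiating this `m` times at `0` by the Leibniz rule, every term of
`φ⁽ᵐ⁺²⁾(0)` contains a factor `φ⁽ᵏ⁾(0)` with `k ≤ m + 1`, except the `f₁` term, which carries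
`|v|²` (this is where `δᵢⱼ` enters). All these coefficients are polynomial in `v`, and
`φ(0) = φ'(0) = 0`, so by strong induction each `v ↦ DⁿΩ(p)(v, …, v)` is `|v|²` times a
polynomial, i.e. its trace-free part vanishes.
-/
open Finset MvPolynomial
open scoped ContDiff Pointwise

section PolynomialFunctions

variable {ι : Type*}

noncomputable def polyFns (ι : Type*) : Subalgebra ℝ ((ι → ℝ) → ℝ) :=
  (aeval fun i (v : ι → ℝ) => v i).range

lemma mem_polyFns_iff {F : (ι → ℝ) → ℝ} :
    F ∈ polyFns ι ↔ ∃ Q : MvPolynomial ι ℝ, ∀ v, F v = eval v Q := by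
  have hcoe (Q : MvPolynomial ι ℝ) (v : ι → ℝ) :
      aeval (fun i (v : ι → ℝ) => v i) Q v = eval v Q := by
    induction Q using MvPolynomial.induction_on <;> simp_all
  simp only [polyFns, AlgHom.mem_range, _root_.funext_iff, hcoe, eq_comm]

lemma coord_mem_polyFns (i : ι) : (fun v : ι → ℝ => v i) ∈ polyFns ι := ⟨X i, aeval_X _ i⟩

lemma ContinuousMultilinearMap.diag_mem_polyFns [Fintype ι] {m : ℕ}
    (A : ContinuousMultilinearMap ℝ (fun _ : Fin m => ι → ℝ) ℝ) :
    (fun v => A fun _ => v) ∈ polyFns ι := by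
  classical
  have hA : (fun v => A fun _ => v) =
      ∑ r : Fin m → ι, (∏ k, fun v : ι → ℝ => v (r k)) * fun _ => A fun k => Pi.single (r k) 1 := by
    funext v
    conv_lhs => rw [pi_eq_sum_univ' v]
    simp only [A.map_sum, A.map_smul_univ, smul_eq_mul, Finset.sum_apply, Pi.mul_apply,
      Finset.prod_apply]
  rw [hA]
  exact sum_mem fun r _ => mul_mem (prod_mem fun k _ => coord_mem_polyFns _)
    (algebraMap_mem _ (A fun k => Pi.single (r k) 1))

variable [Fintype ι]

noncomputable def sqNorm : (ι → ℝ) → ℝ := fun v => ∑ i, v i ^ 2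

noncomputable def sqNormMultiples (ι : Type*) [Fintype ι] : Submodule ℝ ((ι → ℝ) → ℝ) :=
  (polyFns ι).toSubmodule.map (LinearMap.mulLeft ℝ sqNorm)

lemma sqNorm_mul_mem_sqNormMultiples {F : (ι → ℝ) → ℝ} (hF : F ∈ polyFns ι) :
    sqNorm * F ∈ sqNormMultiples ι :=
  ⟨F, hF, rfl⟩

lemma mul_mem_sqNormMultiples_left {F G : (ι → ℝ) → ℝ} (hF : F ∈ polyFns ι)
    (hG : G ∈ sqNormMultiples ι) : F * G ∈ sqNormMultiples ι := by
  obtain ⟨H, hH, rfl⟩ := hG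
  exact ⟨F * H, (Subalgebra.mem_toSubmodule _).2 (mul_mem hF hH),
    by simp only [LinearMap.mulLeft_apply]; ring⟩

lemma mul_mem_sqNormMultiples_right {F G : (ι → ℝ) → ℝ} (hF : F ∈ sqNormMultiples ι)
    (hG : G ∈ polyFns ι) : F * G ∈ sqNormMultiples ι :=
  mul_comm G F ▸ mul_mem_sqNormMultiples_left hG hF

lemma traceFreePartVanishes_of_mem_sqNormMultiples {d : ℕ} (n : ℕ) {F : (Fin d → ℝ) → ℝ}
    (hF : F ∈ sqNormMultiples (Fin d)) : TraceFreePartVanishes n F := by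
  obtain ⟨H, hH, rfl⟩ := hF
  obtain ⟨Q, hQ⟩ := mem_polyFns_iff.1 hH
  exact ⟨Q, fun x => by simp [sqNorm, hQ]⟩

end PolynomialFunctions

section Line

variable {E F : Type*} [NormedAddCommGroup E] [NormedSpace ℝ E] [NormedAddCommGroup F]
  [NormedSpace ℝ F] {U : Set E} {p v : E}

lemma isOpen_line_preimage (hU : IsOpen U) : IsOpen ((fun t : ℝ => p + t • v) ⁻¹' U) :=
  hU.preimage (by fun_prop)

lemma ContDiffOn.comp_line {n : WithTop ℕ∞} {g : E → F} (hg : ContDiffOn ℝ n g U) :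
    ContDiffOn ℝ n (fun t : ℝ => g (p + t • v)) ((fun t : ℝ => p + t • v) ⁻¹' U) :=
  hg.comp (by fun_prop) fun _ ht => ht

lemma derivWithin_comp_line (hU : IsOpen U) {g : E → F} (hg : DifferentiableOn ℝ g U) {t : ℝ}
    (ht : p + t • v ∈ U) :
    derivWithin (fun s : ℝ => g (p + s • v)) ((fun s : ℝ => p + s • v) ⁻¹' U) t =
      fderivWithin ℝ g U (p + t • v) v := by
  rw [derivWithin_of_isOpen (isOpen_line_preimage hU) ht, fderivWithin_of_isOpen hU ht]
  have hline : HasDerivAt (fun s : ℝ => p + s • v) v t := by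
    simpa using ((hasDerivAt_id t).smul_const v).const_add p
  exact ((hg.differentiableAt (hU.mem_nhds ht)).hasFDerivAt.comp_hasDerivAt t hline).deriv

lemma iteratedDerivWithin_comp_line (hU : IsOpen U) {m : ℕ} {g : E → F}
    (hg : ContDiffOn ℝ m g U) (hp : p ∈ U) :
    iteratedDerivWithin m (fun t : ℝ => g (p + t • v)) ((fun t : ℝ => p + t • v) ⁻¹' U) 0 =
      iteratedFDerivWithin ℝ m g U p (fun _ => v) := by
  set ℓ := ContinuousLinearMap.toSpanSingleton ℝ v
  have hshift : IsOpen (-p +ᵥ U) := hU.vadd (-p)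
  have hpre : (fun t : ℝ => p + t • v) ⁻¹' U = ℓ ⁻¹' (-p +ᵥ U) := by
    ext t; simp [ℓ, Set.mem_vadd_set_iff_neg_vadd_mem]
  have hg' : ContDiffOn ℝ m (fun z => g (p + z)) (-p +ᵥ U) :=
    hg.comp (by fun_prop) fun z hz => by simpa [Set.mem_vadd_set_iff_neg_vadd_mem] using hz
  rw [hpre, iteratedDerivWithin_eq_iteratedFDerivWithin]
  have hcomp := ℓ.iteratedFDerivWithin_comp_right hg' hshift.uniqueDiffOn
    (hshift.preimage ℓ.continuous).uniqueDiffOn (x := 0)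
    (by simpa [ℓ, Set.mem_vadd_set_iff_neg_vadd_mem] using hp) le_rfl
  rw [show (fun t : ℝ => g (p + t • v)) = (fun z => g (p + z)) ∘ ℓ from rfl, hcomp]
  simp [ℓ, iteratedFDerivWithin_comp_add_left]

lemma ContDiffOn.fderivWithin_apply_const {n : WithTop ℕ∞} {g : E → F}
    (hU : IsOpen U) (hg : ContDiffOn ℝ (n + 1) g U) (w : E) :
    ContDiffOn ℝ n (fun y => fderivWithin ℝ g U y w) U :=
  (hg.fderivWithin hU.uniqueDiffOn le_rfl).clm_apply contDiffOn_const

end Line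

lemma iteratedDerivWithin_add_two_eq_of_eqOn {S : Set ℝ} (hS : IsOpen S) {x : ℝ} (hx : x ∈ S)
    {m : ℕ} {φ τ ψ χ : ℝ → ℝ} (hφ : ContDiffOn ℝ (m + 1) φ S) (hτ : ContDiffOn ℝ m τ S)
    (hψ : ContDiffOn ℝ m ψ S) (hχ : ContDiffOn ℝ m χ S)
    (h : Set.EqOn (iteratedDerivWithin 2 φ S)
      (φ * τ + ψ + χ * (derivWithin φ S * derivWithin φ S)) S) :
    iteratedDerivWithin (m + 2) φ S x =
      ∑ k ∈ range (m + 1), m.choose k *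
          iteratedDerivWithin k φ S x * iteratedDerivWithin (m - k) τ S x +
        iteratedDerivWithin m ψ S x +
        ∑ k ∈ range (m + 1), m.choose k * iteratedDerivWithin k χ S x *
          ∑ l ∈ range (m - k + 1), (m - k).choose l *
            iteratedDerivWithin (l + 1) φ S x * iteratedDerivWithin (m - k - l + 1) φ S x := by
  have hSu : UniqueDiffOn ℝ S := hS.uniqueDiffOn
  have hφ' : ContDiffOn ℝ m (derivWithin φ S) S := hφ.derivWithin hSu le_rfl
  have hφm : ContDiffOn ℝ m φ S := hφ.of_le (by norm_cast; omega)
  have hsq (j : ℕ) (hj : j ≤ m) : iteratedDerivWithin j (derivWithin φ S * derivWithin φ S) S x =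
      ∑ l ∈ range (j + 1), j.choose l *
        iteratedDerivWithin (l + 1) φ S x * iteratedDerivWithin (j - l + 1) φ S x := by
    rw [iteratedDerivWithin_mul hx hSu ((hφ'.of_le (by exact_mod_cast hj)).contDiffWithinAt hx)
      ((hφ'.of_le (by exact_mod_cast hj)).contDiffWithinAt hx)]
    simp only [← iteratedDerivWithin_succ']
  have hsplit : iteratedDerivWithin (m + 2) φ S x =
      iteratedDerivWithin m (iteratedDerivWithin 2 φ S) S x := by
    have h2 : (fun g => derivWithin g S)^[2] φ = iteratedDerivWithin 2 φ S := by
      ext t; rw [iteratedDerivWithin_eq_iterate]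
    simp only [iteratedDerivWithin_eq_iterate, Function.iterate_add_apply, h2]
  have hsq' : ContDiffOn ℝ m (derivWithin φ S * derivWithin φ S) S := hφ'.mul hφ'
  have hφτ : ContDiffOn ℝ m (φ * τ) S := hφm.mul hτ
  have hχsq : ContDiffOn ℝ m (χ * (derivWithin φ S * derivWithin φ S)) S := hχ.mul hsq'
  have hφτψ : ContDiffOn ℝ m (φ * τ + ψ) S := hφτ.add hψ
  rw [hsplit, iteratedDerivWithin_congr h hx,
    iteratedDerivWithin_add hx hSu (hφτψ.contDiffWithinAt hx) (hχsq.contDiffWithinAt hx),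
    iteratedDerivWithin_add hx hSu (hφτ.contDiffWithinAt hx) (hψ.contDiffWithinAt hx)]
  rw [iteratedDerivWithin_mul hx hSu (hφm.contDiffWithinAt hx) (hτ.contDiffWithinAt hx),
    iteratedDerivWithin_mul hx hSu (hχ.contDiffWithinAt hx) (hsq'.contDiffWithinAt hx)]
  congr 1
  refine sum_congr rfl fun k hk => ?_
  rw [hsq (m - k) (Nat.sub_le m k)]

section Coordinates

variable {d : ℕ} {U : Set (Fin d → ℝ)}

lemma fderivWithin_apply_eq_sum_pdW (g : (Fin d → ℝ) → ℝ) (x v : Fin d → ℝ) :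
    fderivWithin ℝ g U x v = ∑ i, v i * pdW U i g x := by
  conv_lhs => rw [pi_eq_sum_univ' v]
  simp [pdW]

lemma fderivWithin_fderivWithin_apply_eq_sum_pdW {g : (Fin d → ℝ) → ℝ} (hU : IsOpen U)
    (hg : ContDiffOn ℝ 2 g U) {x : Fin d → ℝ} (hx : x ∈ U) (v : Fin d → ℝ) :
    fderivWithin ℝ (fun y => fderivWithin ℝ g U y v) U x v =
      ∑ i, ∑ j, v i * v j * pdW U i (pdW U j g) x := by
  have hd (j : Fin d) : DifferentiableWithinAt ℝ (pdW U j g) U x :=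
    ((hg.fderivWithin_apply_const (n := 1) hU _).differentiableOn one_ne_zero) x hx
  simp_rw [fderivWithin_apply_eq_sum_pdW g _ v, fderivWithin_apply_eq_sum_pdW _ x v]
  refine sum_congr rfl fun i _ => ?_
  change v i * fderivWithin ℝ (fun y => ∑ j, v j * pdW U j g y) U x (Pi.single i 1) = _
  rw [fderivWithin_fun_sum (hU.uniqueDiffOn x hx) fun j _ => (hd j).const_mul (v j)]
  simp only [_root_.sum_apply, mul_sum]
  refine sum_congr rfl fun j _ => ?_
  rw [fderivWithin_const_mul (hU.uniqueDiffOn x hx) (hd j)]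
  simp [pdW]
  ring

lemma iteratedDerivWithin_two_comp_line_eq {Ω f₁ f₂ : (Fin d → ℝ) → ℝ}
    {T : Fin d → Fin d → (Fin d → ℝ) → ℝ} (hU : IsOpen U) (hΩ : ContDiffOn ℝ 2 Ω U)
    (heq : ∀ x ∈ U, ∀ i j, pdW U i (pdW U j Ω) x =
      Ω x * T i j x + f₁ x * (if i = j then 1 else 0) + f₂ x * pdW U i Ω x * pdW U j Ω x)
    (p v : Fin d → ℝ) {t : ℝ} (ht : p + t • v ∈ U) :
    iteratedDerivWithin 2 (fun s : ℝ => Ω (p + s • v)) ((fun s : ℝ => p + s • v) ⁻¹' U) t =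
      Ω (p + t • v) * (∑ i, ∑ j, v i * v j * T i j (p + t • v)) + sqNorm v * f₁ (p + t • v) +
        f₂ (p + t • v) *
          (derivWithin (fun s : ℝ => Ω (p + s • v)) ((fun s : ℝ => p + s • v) ⁻¹' U) t *
            derivWithin (fun s : ℝ => Ω (p + s • v)) ((fun s : ℝ => p + s • v) ⁻¹' U) t) := by
  have hD : Set.EqOn (derivWithin (fun s : ℝ => Ω (p + s • v)) ((fun s : ℝ => p + s • v) ⁻¹' U))
      (fun s => fderivWithin ℝ Ω U (p + s • v) v) ((fun s : ℝ => p + s • v) ⁻¹' U) :=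
    fun s hs => derivWithin_comp_line hU (hΩ.differentiableOn two_ne_zero) hs
  have hDΩ : DifferentiableOn ℝ (fun y => fderivWithin ℝ Ω U y v) U :=
    (hΩ.fderivWithin_apply_const (n := 1) hU v).differentiableOn one_ne_zero
  rw [iteratedDerivWithin_eq_iterate]
  change derivWithin (derivWithin _ _) _ t = _
  rw [derivWithin_congr hD (hD ht), derivWithin_comp_line hU hDΩ ht, hD ht,
    fderivWithin_fderivWithin_apply_eq_sum_pdW hU hΩ ht v]
  simp only [fderivWithin_apply_eq_sum_pdW, heq _ ht, mul_add, sum_add_distrib, mul_ite, mul_one,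
    mul_zero, sum_ite_eq, mem_univ, if_true, sqNorm, mul_sum, sum_mul]
  congr 1
  · congr 1
    · exact sum_congr rfl fun i _ => sum_congr rfl fun j _ => by ring
    · exact sum_congr rfl fun i _ => by ring
  · rw [sum_comm]
    exact sum_congr rfl fun i _ => sum_congr rfl fun j _ => by ring

noncomputable def iteratedDirDeriv (U : Set (Fin d → ℝ)) (p : Fin d → ℝ) (n : ℕ)
    (g : (Fin d → ℝ) → ℝ) : (Fin d → ℝ) → ℝ :=
  fun v => iteratedFDerivWithin ℝ n g U p fun _ => v

lemma iteratedDirDeriv_mem_polyFns (p : Fin d → ℝ) (n : ℕ) (g : (Fin d → ℝ) → ℝ) :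
    iteratedDirDeriv U p n g ∈ polyFns (Fin d) :=
  (iteratedFDerivWithin ℝ n g U p).diag_mem_polyFns

lemma iteratedDirDeriv_zero (p : Fin d → ℝ) (g : (Fin d → ℝ) → ℝ) :
    iteratedDirDeriv U p 0 g = fun _ => g p := by
  funext v
  simp [iteratedDirDeriv]

lemma iteratedDirDeriv_one (hU : IsOpen U) {p : Fin d → ℝ} (hp : p ∈ U) (g : (Fin d → ℝ) → ℝ)
    (v : Fin d → ℝ) : iteratedDirDeriv U p 1 g v = ∑ i, v i * pdW U i g p := by
  rw [iteratedDirDeriv, iteratedFDerivWithin_one_apply (hU.uniqueDiffOn p hp),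
    fderivWithin_apply_eq_sum_pdW]

lemma iteratedDirDeriv_add_two {Ω f₁ f₂ : (Fin d → ℝ) → ℝ}
    {T : Fin d → Fin d → (Fin d → ℝ) → ℝ} (hU : IsOpen U) (hΩ : ContDiffOn ℝ ∞ Ω U)
    (hT : ∀ i j, ContDiffOn ℝ ∞ (T i j) U) (hf₁ : ContDiffOn ℝ ∞ f₁ U)
    (hf₂ : ContDiffOn ℝ ∞ f₂ U)
    (heq : ∀ x ∈ U, ∀ i j, pdW U i (pdW U j Ω) x =
      Ω x * T i j x + f₁ x * (if i = j then 1 else 0) + f₂ x * pdW U i Ω x * pdW U j Ω x)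
    {p : Fin d → ℝ} (hp : p ∈ U) (m : ℕ) :
    iteratedDirDeriv U p (m + 2) Ω =
      ∑ k ∈ range (m + 1), (m.choose k : ℝ) • (iteratedDirDeriv U p k Ω *
          ∑ i, ∑ j, (fun v => v i * v j) * iteratedDirDeriv U p (m - k) (T i j)) +
        sqNorm * iteratedDirDeriv U p m f₁ +
        ∑ k ∈ range (m + 1), (m.choose k : ℝ) • (iteratedDirDeriv U p k f₂ *
          ∑ l ∈ range (m - k + 1), ((m - k).choose l : ℝ) •
            (iteratedDirDeriv U p (l + 1) Ω * iteratedDirDeriv U p (m - k - l + 1) Ω)) := by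
  funext v
  set S := (fun t : ℝ => p + t • v) ⁻¹' U
  have hS : IsOpen S := isOpen_line_preimage hU
  have h0 : (0 : ℝ) ∈ S := by simpa [S] using hp
  have hline (k : ℕ) {g : (Fin d → ℝ) → ℝ} (hg : ContDiffOn ℝ ∞ g U) :
      iteratedDerivWithin k (fun t => g (p + t • v)) S 0 = iteratedDirDeriv U p k g v :=
    iteratedDerivWithin_comp_line hU (hg.of_le (by exact_mod_cast le_top)) hp
  have hTline (i j : Fin d) : ContDiffOn ℝ ∞ (fun t => v i * v j * T i j (p + t • v)) S :=
    contDiffOn_const.mul (hT i j).comp_line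
  have hτ (k : ℕ) : iteratedDerivWithin k (fun t => ∑ i, ∑ j, v i * v j * T i j (p + t • v)) S 0 =
      ∑ i, ∑ j, v i * v j * iteratedDirDeriv U p k (T i j) v := by
    rw [iteratedDerivWithin_fun_sum h0 hS.uniqueDiffOn fun i _ =>
      ((ContDiffOn.sum fun j _ => hTline i j).of_le (by exact_mod_cast le_top)).contDiffWithinAt h0]
    refine sum_congr rfl fun i _ => ?_
    rw [iteratedDerivWithin_fun_sum h0 hS.uniqueDiffOn fun j _ =>
      ((hTline i j).of_le (by exact_mod_cast le_top)).contDiffWithinAt h0]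
    simp only [iteratedDerivWithin_const_mul_field, hline k (hT _ _)]
  have hsmooth {n : ℕ} {g : ℝ → ℝ} (hg : ContDiffOn ℝ ∞ g S) : ContDiffOn ℝ n g S :=
    hg.of_le (by exact_mod_cast le_top)
  rw [← hline (m + 2) hΩ, iteratedDerivWithin_add_two_eq_of_eqOn hS h0
    (hsmooth hΩ.comp_line)
    (hsmooth (ContDiffOn.sum fun i _ => ContDiffOn.sum fun j _ => hTline i j))
    (hsmooth (contDiffOn_const.mul hf₁.comp_line)) (hsmooth hf₂.comp_line)
    fun t ht => iteratedDerivWithin_two_comp_line_eq hU (hΩ.of_le ENat.LEInfty.out) heq p v ht]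
  simp only [Finset.sum_apply, Pi.add_apply, Pi.mul_apply, Pi.smul_apply, smul_eq_mul,
    iteratedDerivWithin_const_mul_field, hline _ hΩ, hline _ hf₁, hline _ hf₂, hτ]
  simp only [mul_assoc]

lemma iteratedDirDeriv_add_two_mem_sqNormMultiples {Ω f₁ f₂ : (Fin d → ℝ) → ℝ}
    {T : Fin d → Fin d → (Fin d → ℝ) → ℝ} (hU : IsOpen U) (hΩ : ContDiffOn ℝ ∞ Ω U)
    (hT : ∀ i j, ContDiffOn ℝ ∞ (T i j) U) (hf₁ : ContDiffOn ℝ ∞ f₁ U)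
    (hf₂ : ContDiffOn ℝ ∞ f₂ U)
    (heq : ∀ x ∈ U, ∀ i j, pdW U i (pdW U j Ω) x =
      Ω x * T i j x + f₁ x * (if i = j then 1 else 0) + f₂ x * pdW U i Ω x * pdW U j Ω x)
    {p : Fin d → ℝ} (hp : p ∈ U) {m : ℕ}
    (hlower : ∀ k < m + 2, iteratedDirDeriv U p k Ω ∈ sqNormMultiples (Fin d)) :
    iteratedDirDeriv U p (m + 2) Ω ∈ sqNormMultiples (Fin d) := by
  have hpoly := iteratedDirDeriv_mem_polyFns (U := U) p
  rw [iteratedDirDeriv_add_two hU hΩ hT hf₁ hf₂ heq hp m]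
  refine add_mem (add_mem ?_ (sqNorm_mul_mem_sqNormMultiples (hpoly _ _))) ?_
  · refine sum_mem fun k hk => Submodule.smul_mem _ _ (mul_mem_sqNormMultiples_right
      (hlower k (by simp at hk; omega)) (sum_mem fun i _ => sum_mem fun j _ => ?_))
    exact mul_mem (mul_mem (coord_mem_polyFns i) (coord_mem_polyFns j)) (hpoly _ _)
  · refine sum_mem fun k hk => Submodule.smul_mem _ _ (mul_mem_sqNormMultiples_left (hpoly _ _)
      (sum_mem fun l hl => Submodule.smul_mem _ _ ?_))
    exact mul_mem_sqNormMultiples_right (hlower (l + 1) (by simp at hk hl; omega)) (hpoly _ _)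

end Coordinates

theorem trace_free_derivatives_vanish_general {d : ℕ}
    (U : Set (Fin d → ℝ)) (hUopen : IsOpen U)
    (Ω f₁ f₂ : (Fin d → ℝ) → ℝ) (T : Fin d → Fin d → (Fin d → ℝ) → ℝ)
    (hΩ : ContDiffOn ℝ (⊤ : ℕ∞) Ω U)
    (hT : ∀ i j, ContDiffOn ℝ (⊤ : ℕ∞) (T i j) U)
    (hf₁ : ContDiffOn ℝ (⊤ : ℕ∞) f₁ U)
    (hf₂ : ContDiffOn ℝ (⊤ : ℕ∞) f₂ U)
    (heq : ∀ x ∈ U, ∀ i j, pdW U i (pdW U j Ω) x =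
      Ω x * T i j x + f₁ x * (if i = j then 1 else 0) + f₂ x * pdW U i Ω x * pdW U j Ω x)
    (p : Fin d → ℝ) (hp : p ∈ U)
    (hΩp : Ω p = 0)
    (hdΩp : ∀ i, pdW U i Ω p = 0) :
    ∀ n : ℕ, 1 ≤ n →
      TraceFreePartVanishes n (fun x => iteratedFDerivWithin ℝ n Ω U p (fun _ => x)) := by
  rintro n -
  refine traceFreePartVanishes_of_mem_sqNormMultiples n ?_
  change iteratedDirDeriv U p n Ω ∈ _
  induction n using Nat.strong_induction_on with
  | _ n ih =>
  match n with
  | 0 =>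
    rw [iteratedDirDeriv_zero, hΩp]
    exact zero_mem _
  | 1 =>
    have hzero : iteratedDirDeriv U p 1 Ω = 0 := by
      funext v
      simp [iteratedDirDeriv_one hUopen hp, hdΩp]
    rw [hzero]
    exact zero_mem _
  | m + 2 => exact iteratedDirDeriv_add_two_mem_sqNormMultiples hUopen hΩ hT hf₁ hf₂ heq hp ih

/-- if a smooth `Ω` on an open connected `U ⊆ ℝᵈ` satisfies
`∂ᵢ∂ⱼΩ = Ω Tᵢⱼ + f₁ δᵢⱼ + f₂ ∂ᵢΩ ∂ⱼΩ` with smooth `T, f₁, f₂`, and at `p ∈ U`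
`Ω(p) = 0`, `∂ᵢΩ(p) = 0`, `∂ᵢ∂ⱼΩ(p) = 2δᵢⱼ`, then for every `n ≥ 1` the totally
symmetric trace-free part of `∂_{j₁}⋯∂_{jₙ}Ω` vanishes at `p`. -/
theorem trace_free_derivatives_vanish {d : ℕ}
    (U : Set (Fin d → ℝ)) (hUopen : IsOpen U) (hUconn : IsConnected U)
    (Ω f₁ f₂ : (Fin d → ℝ) → ℝ) (T : Fin d → Fin d → (Fin d → ℝ) → ℝ)
    (hΩ : ContDiffOn ℝ (⊤ : ℕ∞) Ω U)
    (hT : ∀ i j, ContDiffOn ℝ (⊤ : ℕ∞) (T i j) U)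
    (hf₁ : ContDiffOn ℝ (⊤ : ℕ∞) f₁ U)
    (hf₂ : ContDiffOn ℝ (⊤ : ℕ∞) f₂ U)
    (heq : ∀ x ∈ U, ∀ i j, pdW U i (pdW U j Ω) x =
      Ω x * T i j x + f₁ x * (if i = j then 1 else 0) + f₂ x * pdW U i Ω x * pdW U j Ω x)
    (p : Fin d → ℝ) (hp : p ∈ U)
    (hΩp : Ω p = 0)
    (hdΩp : ∀ i, pdW U i Ω p = 0)
    (hddΩp : ∀ i j, pdW U i (pdW U j Ω) p = if i = j then 2 else 0) :
    ∀ n : ℕ, 1 ≤ n →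
      TraceFreePartVanishes n (fun x => iteratedFDerivWithin ℝ n Ω U p (fun _ => x)) :=
  trace_free_derivatives_vanish_general U hUopen Ω f₁ f₂ T hΩ hT hf₁ hf₂ heq p hp hΩp hdΩp
end
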